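/- arXiv:math/0303174 — 11 statements merged into one kernel-verified Lean document; each statement's English description precedes it below -/
import Mathlib

section
/- For any positive odd integer n and coprime nonzero integers x, y with x + y ≠ 0, the gcd of (x+y) and (x^n + y^n)/(x+y) equals the gcd of (x+y) and n. -/
/-! With `Q = ∑ i < n, x ^ i * (-y) ^ (n - 1 - i)` we have `x ^ n + y ^ n = (x + y) * Q` since `n` is
odd. Modulo any divisor `d` of `x + y` we have `x ≡ -y`, so `Q ≡ n * y ^ (n - 1)`; as `d` is coprime
to `y`, `d ∣ Q ↔ d ∣ n`. Hence `x + y` has the same common divisors with `Q` as with `n`. -/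

open Finset

lemma Int.gcd_eq_gcd_of_forall_dvd_iff {a b c : ℤ} (h : ∀ d, d ∣ a → (d ∣ b ↔ d ∣ c)) :
    Int.gcd a b = Int.gcd a c := by
  have key : ∀ {b c : ℤ}, (∀ d, d ∣ a → (d ∣ b ↔ d ∣ c)) → Int.gcd a b ∣ Int.gcd a c :=
    fun h ↦ Int.natCast_dvd_natCast.mp <| Int.dvd_coe_gcd (Int.gcd_dvd_left ..) <|
      (h _ (Int.gcd_dvd_left ..)).mp (Int.gcd_dvd_right ..)
  exact Nat.dvd_antisymm (key h) (key fun d hd ↦ (h d hd).symm)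

variable {R : Type*} [CommRing R]

lemma Odd.pow_add_pow_eq_mul_geom_sum₂ {n : ℕ} (hn : Odd n) (x y : R) :
    x ^ n + y ^ n = (x + y) * ∑ i ∈ range n, x ^ i * (-y) ^ (n - 1 - i) := by
  rw [mul_comm, ← sub_neg_eq_add x y, geom_sum₂_mul, hn.neg_pow, sub_neg_eq_add]

lemma Odd.dvd_geom_sum₂_neg_iff {n : ℕ} (hn : Odd n) {x y d : R} (hd : d ∣ x + y)
    (hdy : IsCoprime d y) :
    d ∣ ∑ i ∈ range n, x ^ i * (-y) ^ (n - 1 - i) ↔ d ∣ n := by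
  have hd' : d ∣ x - -y := by rwa [sub_neg_eq_add]
  rw [dvd_geom_sum₂_iff_of_dvd_sub hd', (hn.tsub_odd odd_one).neg_pow]
  exact ⟨hdy.pow_right.dvd_of_dvd_mul_right, (Dvd.dvd.mul_right · _)⟩

theorem stmt_0_general (n : ℕ) (hn : Odd n) (x y : ℤ)
    (hxy : IsCoprime x y) (hsum : x + y ≠ 0) :
    Int.gcd (x + y) ((x ^ n + y ^ n) / (x + y)) = Int.gcd (x + y) n := by
  rw [hn.pow_add_pow_eq_mul_geom_sum₂, Int.mul_ediv_cancel_left _ hsum]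
  have hsy : IsCoprime (x + y) y := by simpa using hxy.add_mul_right_left 1
  exact Int.gcd_eq_gcd_of_forall_dvd_iff fun d hd ↦
    hn.dvd_geom_sum₂_neg_iff hd (hsy.of_isCoprime_of_dvd_left hd)

theorem stmt_0 (n : ℕ) (hn : Odd n) (hnpos : 0 < n) (x y : ℤ)
    (hx : x ≠ 0) (hy : y ≠ 0) (hxy : IsCoprime x y) (hsum : x + y ≠ 0) :
    Int.gcd (x + y) ((x ^ n + y ^ n) / (x + y)) = Int.gcd (x + y) n :=
  stmt_0_general n hn x y hxy hsum
end

section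
/- For any prime p > 3 and integers x, y, the quantity (x+y)^p - x^p - y^p is divisible by p·x·y·(x+y)·(x^2+xy+y^2). -/
/-!
Write `E_n(X) = (X + 1)^n - X^n - 1` (`cauchyPoly`) for the dehomogenization of `(x + y)^n - x^n - y^n`.
For `n ≡ ±1 (mod 6)`, `E_n` vanishes at `0`, at `-1` and at the primitive cube roots of unity
(where `X + 1 = -X²`), so the pairwise coprime factors `X`, `X + 1`, `X² + X + 1` all divide it;
for a prime `n = p`, Frobenius shows moreover that `p ∣ E_p`. As `p` is prime in `ℤ[X]` and does
not divide the monic product, `p X (X + 1) (X² + X + 1) ∣ E_p`. Homogenizing in degree `p`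
(which contributes the factor `y`, because `deg E_p = p - 1`) and evaluating at `(x, y)` gives
the theorem.
-/

open Polynomial

theorem add_one_pow_sub_pow_sub_one_eq_zero {R : Type*} [CommRing R] {u : R}
    (hu : u ^ 2 + u + 1 = 0) {n : ℕ} (hn : n % 6 = 1 ∨ n % 6 = 5) :
    (u + 1) ^ n - u ^ n - 1 = 0 := by
  have hu6 : u ^ 6 = 1 := by linear_combination (u - 1) * (u ^ 3 + 1) * hu
  have hv6 : (u + 1) ^ 6 = 1 := by linear_combination u * (u ^ 2 + 3 * u + 3) * (u + 2) * hu
  rw [← Nat.div_add_mod n 6, pow_add, pow_add, pow_mul, pow_mul, hu6, hv6, one_pow, one_mul,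
    one_mul]
  rcases hn with h | h <;> rw [h]
  · ring
  · linear_combination 5 * u * (u + 1) * hu

theorem Prime.mul_dvd_of_dvd_of_not_dvd {M : Type*} [CommMonoidWithZero M] {π a b : M}
    (hπ : Prime π) (ha : ¬π ∣ a) (hab : a ∣ b) (hb : π ∣ b) : π * a ∣ b := by
  obtain ⟨c, rfl⟩ := hab
  obtain ⟨d, rfl⟩ := (hπ.dvd_or_dvd hb).resolve_left ha
  rw [mul_comm π a]
  exact mul_dvd_mul_left a (dvd_mul_right π d)

theorem Nat.Prime.mod_six_eq_one_or_five {p : ℕ} (hp : p.Prime) (hp3 : 3 < p) :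
    p % 6 = 1 ∨ p % 6 = 5 := by
  have h2 := hp.eq_one_or_self_of_dvd 2
  have h3 := hp.eq_one_or_self_of_dvd 3
  omega

namespace Polynomial

noncomputable def cauchyPoly (R : Type*) [CommRing R] (n : ℕ) : R[X] := (X + 1) ^ n - X ^ n - 1

section CommRing

variable {R : Type*} [CommRing R] {n : ℕ}

theorem X_dvd_cauchyPoly (hn : n ≠ 0) : (X : R[X]) ∣ cauchyPoly R n := by
  have h := sub_dvd_pow_sub_pow (X + 1 : R[X]) 1 n
  rw [add_sub_cancel_right, one_pow] at h
  simpa [cauchyPoly, sub_right_comm] using h.sub (dvd_pow_self X hn)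

theorem X_add_one_dvd_cauchyPoly (hn : Odd n) : (X + 1 : R[X]) ∣ cauchyPoly R n := by
  simpa [cauchyPoly, sub_sub] using
    (dvd_pow_self (X + 1 : R[X]) hn.pos.ne').sub (Odd.add_dvd_pow_add_pow X 1 hn)

theorem X_sq_add_X_add_one_dvd_cauchyPoly (hn : n % 6 = 1 ∨ n % 6 = 5) :
    (X ^ 2 + X + 1 : R[X]) ∣ cauchyPoly R n := by
  rw [← AdjoinRoot.mk_eq_zero, cauchyPoly]
  have hroot := AdjoinRoot.mk_self (f := (X ^ 2 + X + 1 : R[X]))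
  simp only [map_sub, map_add, map_pow, map_one, AdjoinRoot.mk_X] at hroot ⊢
  exact add_one_pow_sub_pow_sub_one_eq_zero hroot hn

theorem X_mul_X_add_one_mul_dvd_cauchyPoly (hn : n % 6 = 1 ∨ n % 6 = 5) :
    (X * (X + 1) * (X ^ 2 + X + 1) : R[X]) ∣ cauchyPoly R n := by
  have hodd : Odd n := by rw [Nat.odd_iff]; omega
  have h₁ : IsCoprime (X : R[X]) (X + 1) := ⟨-1, 1, by ring⟩
  have h₂ : IsCoprime (X * (X + 1) : R[X]) (X ^ 2 + X + 1) := ⟨-1, 1, by ring⟩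
  exact h₂.mul_dvd (h₁.mul_dvd (X_dvd_cauchyPoly hodd.pos.ne') (X_add_one_dvd_cauchyPoly hodd))
    (X_sq_add_X_add_one_dvd_cauchyPoly hn)

theorem natDegree_cauchyPoly_le : (cauchyPoly R n).natDegree ≤ n - 1 := by
  rw [natDegree_le_iff_coeff_eq_zero]
  intro N hN
  simp only [cauchyPoly, coeff_sub, coeff_X_add_one_pow, coeff_X_pow, coeff_one]
  rcases eq_or_ne N n with rfl | hNn
  · simp [show N ≠ 0 by omega]
  · simp [Nat.choose_eq_zero_of_lt (show n < N by omega), hNn, show N ≠ 0 by omega]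

theorem homogenize_add_one {p : R[X]} (hp : p.natDegree ≤ n) :
    homogenize p (n + 1) = .X 1 * homogenize p n := by
  simpa [add_comm] using homogenize_mul 1 p (m := 1) (by simp) hp

theorem homogenize_cauchyPoly :
    homogenize (cauchyPoly R n) n = (.X 0 + .X 1) ^ n - .X 0 ^ n - .X 1 ^ n := by
  have hX := MvPolynomial.isHomogeneous_X R (0 : Fin 2)
  have hY := MvPolynomial.isHomogeneous_X R (1 : Fin 2)
  apply homogenize_eq_of_isHomogeneous
  · simpa using ((hX.add hY).pow n).sub (hX.pow n) |>.sub (hY.pow n)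
  · simp [cauchyPoly]

theorem homogenize_X_mul_X_add_one_mul_X_sq_add_X_add_one :
    homogenize (X * (X + 1) * (X ^ 2 + X + 1) : R[X]) 4 =
      .X 0 * (.X 0 + .X 1) * (.X 0 ^ 2 + .X 0 * .X 1 + .X 1 ^ 2) := by
  have hX := MvPolynomial.isHomogeneous_X R (0 : Fin 2)
  have hY := MvPolynomial.isHomogeneous_X R (1 : Fin 2)
  apply homogenize_eq_of_isHomogeneous
  · exact (hX.mul (hX.add hY)).mul (((hX.pow 2).add (hX.mul hY)).add (hY.pow 2))
  · simp

end CommRing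

section IsDomain

variable {R : Type*} [CommRing R] [IsDomain R]

theorem homogenize_dvd_homogenize {p q : R[X]} {n : ℕ} (h : p ∣ q) (hq : q.natDegree ≤ n) :
    homogenize p p.natDegree ∣ homogenize q n := by
  obtain ⟨r, rfl⟩ := h
  obtain rfl | rfl | ⟨hp, hr⟩ : p = 0 ∨ r = 0 ∨ p ≠ 0 ∧ r ≠ 0 := by tauto
  · simp
  · simp
  rw [natDegree_mul hp hr] at hq
  rw [← Nat.add_sub_of_le (le_of_add_le_left hq), homogenize_mul _ _ le_rfl (by omega)]
  exact dvd_mul_right _ _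

theorem X_one_mul_homogenize_dvd_of_dvd_cauchyPoly {n : ℕ} (hn : n ≠ 0) {p : R[X]}
    (hp : p ∣ cauchyPoly R n) :
    .X 1 * homogenize p p.natDegree ∣ (.X 0 + .X 1) ^ n - .X 0 ^ n - .X 1 ^ n := by
  have h := homogenize_add_one (natDegree_cauchyPoly_le (R := R) (n := n))
  rw [Nat.sub_add_cancel (Nat.one_le_iff_ne_zero.2 hn), homogenize_cauchyPoly] at h
  rw [h]
  exact mul_dvd_mul_left _ (homogenize_dvd_homogenize hp natDegree_cauchyPoly_le)

end IsDomain

theorem C_dvd_cauchyPoly {p : ℕ} (hp : p.Prime) : C (p : ℤ) ∣ cauchyPoly ℤ p := by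
  have := Fact.mk hp
  rw [C_dvd_iff_dvd_coeff]
  intro i
  rw [← ZMod.intCast_zmod_eq_zero_iff_dvd, ← eq_intCast (Int.castRingHom (ZMod p)), ← coeff_map]
  simp [cauchyPoly, add_pow_char]

theorem C_mul_X_mul_X_add_one_mul_dvd_cauchyPoly {p : ℕ} (hp : p.Prime)
    (hp6 : p % 6 = 1 ∨ p % 6 = 5) :
    C (p : ℤ) * (X * (X + 1) * (X ^ 2 + X + 1)) ∣ cauchyPoly ℤ p := by
  have hmonic : (X * (X + 1) * (X ^ 2 + X + 1) : ℤ[X]).Monic := by monicity!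
  refine (prime_C_iff.2 (Nat.prime_iff_prime_int.1 hp)).mul_dvd_of_dvd_of_not_dvd ?_
    (X_mul_X_add_one_mul_dvd_cauchyPoly hp6) (C_dvd_cauchyPoly hp)
  rw [hmonic.C_dvd_iff_isUnit, Int.isUnit_iff]
  have := hp.two_le
  omega

end Polynomial

theorem stmt_2 (p : ℕ) (hp : p.Prime) (hp3 : 3 < p) (x y : ℤ) :
    (p : ℤ) * x * y * (x + y) * (x ^ 2 + x * y + y ^ 2) ∣
      (x + y) ^ p - x ^ p - y ^ p := by
  have hD := C_mul_X_mul_X_add_one_mul_dvd_cauchyPoly hp (hp.mod_six_eq_one_or_five hp3)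
  have hdeg : (C (p : ℤ) * (X * (X + 1) * (X ^ 2 + X + 1))).natDegree = 4 := by
    compute_degree!
    exact hp.ne_zero
  have key := X_one_mul_homogenize_dvd_of_dvd_cauchyPoly hp.ne_zero hD
  rw [hdeg, homogenize_C_mul, homogenize_X_mul_X_add_one_mul_X_sq_add_X_add_one] at key
  have := map_dvd (MvPolynomial.eval ![x, y]) key
  simp only [map_mul, map_sub, map_add, map_pow, MvPolynomial.eval_X, MvPolynomial.eval_C,
    Matrix.cons_val_zero, Matrix.cons_val_one] at this
  exact (dvd_of_eq (by ring)).trans this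
end

section
/- For a prime p ≡ -1 (mod 6), the polynomial (x+y)^p - x^p - y^p in ℤ[x,y] is not divisible by (x^2+xy+y^2)^2. -/
open MvPolynomial

theorem stmt_6 (p : ℕ) (hp : p.Prime) (hp5 : p % 6 = 5) :
    ¬ (((X 0) ^ 2 + X 0 * X 1 + (X 1) ^ 2 : MvPolynomial (Fin 2) ℤ) ^ 2 ∣
      (X 0 + X 1) ^ p - X 0 ^ p - X 1 ^ p) := by
  intro h
  -- Map to one variable: X 0 ↦ X, X 1 ↦ 1
  have h2 : ((Polynomial.X ^ 2 + Polynomial.X + 1 : Polynomial ℤ)) ^ 2 ∣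
      (Polynomial.X + 1) ^ p - Polynomial.X ^ p - 1 := by
    have := map_dvd
      (aeval (fun i : Fin 2 => if i = 0 then Polynomial.X else 1) :
        MvPolynomial (Fin 2) ℤ →ₐ[ℤ] Polynomial ℤ) h
    simpa using this
  -- Hence X^2+X+1 divides the derivative
  obtain ⟨r, hr⟩ := h2
  have hd : (Polynomial.X ^ 2 + Polynomial.X + 1 : Polynomial ℤ) ∣
      Polynomial.derivative ((Polynomial.X + 1) ^ p - Polynomial.X ^ p - 1) := by
    rw [hr]
    refine ⟨2 * Polynomial.derivative (Polynomial.X ^ 2 + Polynomial.X + 1) * r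
      + (Polynomial.X ^ 2 + Polynomial.X + 1) * Polynomial.derivative r, ?_⟩
    have hder : Polynomial.derivative (Polynomial.X ^ 2 + Polynomial.X + 1 : Polynomial ℤ)
        = 2 * Polynomial.X + 1 := by
      simp only [Polynomial.derivative_add, Polynomial.derivative_pow, Polynomial.derivative_X,
        Polynomial.derivative_one, Nat.cast_ofNat, pow_one, mul_one, add_zero,
        map_ofNat]
      push_cast
      ring
    rw [Polynomial.derivative_mul, Polynomial.derivative_pow, hder]
    simp only [Nat.cast_ofNat, map_ofNat]
    ring
  -- Evaluate at ω, a primitive cube root of unity in ℂ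
  set s : ℂ := ((Real.sqrt 3 : ℝ) : ℂ) with hs_def
  set ω : ℂ := (-1 + Complex.I * s) / 2 with hω_def
  have hs : s ^ 2 = 3 := by
    rw [hs_def]
    norm_cast
    exact Real.sq_sqrt (by norm_num)
  have hω : ω ^ 2 + ω + 1 = 0 := by
    rw [hω_def]
    linear_combination (s ^ 2 / 4) * Complex.I_sq + (-1 / 4 : ℂ) * hs
  have hcube : ω ^ 3 = 1 := by linear_combination (ω - 1) * hω
  have hp1 : 1 ≤ p := hp.one_lt.le.trans' (by norm_num)
  have h5 : (p : ℂ) * (ω + 1) ^ (p - 1) - (p : ℂ) * ω ^ (p - 1) = 0 := by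
    obtain ⟨t, ht⟩ := hd
    have h0 : (Polynomial.aeval ω) (Polynomial.X ^ 2 + Polynomial.X + 1 : Polynomial ℤ) = 0 := by
      simp only [map_add, map_pow, map_one, Polynomial.aeval_X]
      exact hω
    have := congrArg (Polynomial.aeval ω) ht
    rw [map_mul, h0, zero_mul] at this
    rw [Polynomial.derivative_sub, Polynomial.derivative_sub, Polynomial.derivative_one,
      Polynomial.derivative_pow, Polynomial.derivative_pow, Polynomial.derivative_add,
      Polynomial.derivative_X, Polynomial.derivative_one, add_zero] at this
    simpa using this
  -- Compute the powers of ω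
  have hk : p = 6 * (p / 6) + 5 := by omega
  set k := p / 6 with hk_def
  have e1 : ω ^ (p - 1) = ω := by
    have hpe : p - 1 = 3 * (2 * k + 1) + 1 := by omega
    rw [hpe, pow_add, pow_mul, hcube, one_pow, one_mul, pow_one]
  have e2 : (ω + 1) ^ (p - 1) = ω ^ 2 := by
    have hne : ω + 1 = -ω ^ 2 := by linear_combination hω
    have hpe : p - 1 = 2 * (3 * k + 2) := by omega
    rw [hne, hpe, pow_mul]
    have hsq : (-ω ^ 2) ^ 2 = ω ^ 4 := by ring
    rw [hsq, ← pow_mul]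
    have h4 : 4 * (3 * k + 2) = 3 * (4 * k + 2) + 2 := by ring
    rw [h4, pow_add, pow_mul, hcube, one_pow, one_mul]
  rw [e1, e2] at h5
  have hp0 : (p : ℂ) ≠ 0 := Nat.cast_ne_zero.mpr hp.pos.ne'
  have h6 : (p : ℂ) * (ω * (ω - 1)) = 0 := by linear_combination h5
  rcases mul_eq_zero.mp h6 with h7 | h7
  · exact hp0 h7
  rcases mul_eq_zero.mp h7 with h8 | h8
  · rw [h8] at hω; norm_num at hω
  · rw [sub_eq_zero] at h8
    rw [h8] at hω; norm_num at hω
end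

section
/- If p is a prime and x, y, z are pairwise coprime nonzero integers with x^p + y^p = z^p and p dividing none of x, y, z, then z^p ≡ x + y (mod p^2). -/
private lemma aux_pow (a b : ℤ) (n : ℕ) :
    a ^ 2 ∣ (a + b) ^ (n + 1) - b ^ (n + 1) - ((n + 1 : ℕ) : ℤ) * a * b ^ n := by
  induction n with
  | zero => exact ⟨0, by push_cast; ring⟩
  | succ k ih =>
    obtain ⟨r, hr⟩ := ih
    exact ⟨((k : ℤ) + 1) * b ^ k + r * (a + b), by
      push_cast at hr ⊢; linear_combination (a + b) * hr⟩

theorem stmt_7 (p : ℕ) (hp : p.Prime) (x y z : ℤ)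
    (hx : x ≠ 0) (hy : y ≠ 0) (hz : z ≠ 0)
    (hxy : IsCoprime x y) (hxz : IsCoprime x z) (hyz : IsCoprime y z)
    (hfermat : x ^ p + y ^ p = z ^ p) (hpxyz : ¬ (p : ℤ) ∣ x * y * z) :
    z ^ p ≡ x + y [ZMOD (p : ℤ) ^ 2] := by
  haveI := Fact.mk hp
  have fl : ∀ a : ℤ, (p : ℤ) ∣ a ^ p - a := by
    intro a
    rw [← ZMod.intCast_zmod_eq_zero_iff_dvd]
    push_cast
    rw [ZMod.pow_card]
    ring
  rcases hp.eq_two_or_odd' with h2 | hodd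
  · exfalso
    subst h2
    have hdx : ¬ (2:ℤ) ∣ x := fun h => hpxyz ((h.mul_right y).mul_right z)
    have hdy : ¬ (2:ℤ) ∣ y := fun h => hpxyz ((h.mul_left x).mul_right z)
    have hdz : ¬ (2:ℤ) ∣ z := fun h => hpxyz (h.mul_left (x * y))
    obtain ⟨a, ha⟩ : ∃ a, x = 2 * a + 1 := ⟨x / 2, by omega⟩
    obtain ⟨b, hb⟩ : ∃ b, y = 2 * b + 1 := ⟨y / 2, by omega⟩
    obtain ⟨c, hc⟩ : ∃ c, z = 2 * c + 1 := ⟨z / 2, by omega⟩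
    subst ha hb hc
    have key : (4:ℤ) * (a * a + a + b * b + b - c * c - c) = -1 := by
      linear_combination hfermat
    have h4 : (4:ℤ) ∣ -1 := ⟨_, key.symm⟩
    norm_num at h4
  obtain ⟨m, hm⟩ : ∃ m, p = m + 1 := ⟨p - 1, by have := hp.two_le; omega⟩
  subst hm
  have hem : Even m := by rcases hodd with ⟨t, ht⟩; exact ⟨t, by omega⟩
  have hoddZ : Odd (m + 1) := hodd
  obtain ⟨R, hR⟩ := aux_pow (x + y) (-x) m
  rw [show x + y + -x = y by ring, hoddZ.neg_pow, hem.neg_pow] at hR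
  set Q : ℤ := ((m + 1 : ℕ) : ℤ) * x ^ m + (x + y) * R with hQdef
  have hQ : (x + y) * Q = z ^ (m + 1) := by
    rw [← hfermat, hQdef]; linear_combination -hR
  have hprime : Prime ((m + 1 : ℕ) : ℤ) := Nat.prime_iff_prime_int.mp hp
  have hpz : ¬ ((m + 1 : ℕ) : ℤ) ∣ z := fun h => hpxyz (h.mul_left (x * y))
  have hps : ¬ ((m + 1 : ℕ) : ℤ) ∣ (x + y) := by
    intro h
    exact hpz (hprime.dvd_of_dvd_pow (n := m + 1) (hQ ▸ h.mul_right Q))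
  have c1 : IsCoprime (x + y) x := by
    have := hxy.symm.add_mul_right_left 1
    rwa [one_mul, add_comm] at this
  have c2 : IsCoprime (x + y) ((m + 1 : ℕ) : ℤ) :=
    (hprime.coprime_iff_not_dvd.mpr hps).symm
  have cQ : IsCoprime (x + y) Q := by
    have := (c2.mul_right (c1.pow_right (n := m))).add_mul_left_right R
    rwa [hQdef]
  obtain ⟨d, hd⟩ := Int.eq_pow_of_mul_eq_pow_odd_left cQ hodd hQ
  have h1 : ((m + 1 : ℕ) : ℤ) ∣ z - (x + y) := by
    obtain ⟨u, hu⟩ := fl x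
    obtain ⟨v, hv⟩ := fl y
    obtain ⟨w, hw⟩ := fl z
    exact ⟨u + v - w, by linear_combination hu + hv - hw - hfermat⟩
  have h2 := dvd_sub_pow_of_dvd_sub h1 1
  have h3 := dvd_sub_pow_of_dvd_sub (fl d) 1
  simp only [pow_one] at h2 h3
  rw [← hd] at h3
  rw [Int.modEq_iff_dvd]
  obtain ⟨U, hU⟩ := h2
  obtain ⟨V, hV⟩ := h3
  exact ⟨-(U + V), by linear_combination -hU - hV⟩
end

section
/- If p is a prime and x, y, z are pairwise coprime nonzero integers with x^p + y^p = z^p and p ∤ xyz, then x + y - z ≡ 0 (mod p^2). -/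
private lemma barlow (p : ℕ) (hp : p.Prime) (hodd : Odd p) (a b c : ℤ)
    (hab : IsCoprime a b) (h : a ^ p + b ^ p = c ^ p) (hpc : ¬ (p : ℤ) ∣ c) :
    ∃ t : ℤ, a + b = t ^ p ∧ (p : ℤ) ∣ t - c := by
  haveI : Fact p.Prime := ⟨hp⟩
  have hpZ : Prime (p : ℤ) := Nat.prime_iff_prime_int.mp hp
  set Q : ℤ := ∑ i ∈ Finset.range p, a ^ i * (-b) ^ (p - 1 - i) with hQdef
  have hQ : Q * (a + b) = c ^ p := by
    have hgs := geom_sum₂_mul a (-b) p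
    rw [sub_neg_eq_add, hodd.neg_pow] at hgs
    rw [hQdef, hgs, sub_neg_eq_add, h]
  have hdvd : (a + b) ∣ Q - (p : ℤ) * a ^ (p - 1) := by
    have key : Q - (p : ℤ) * a ^ (p - 1)
        = ∑ i ∈ Finset.range p, a ^ i * ((-b) ^ (p - 1 - i) - a ^ (p - 1 - i)) := by
      rw [hQdef]
      rw [Finset.sum_congr rfl (fun i hi => by ring_nf :
        ∀ i ∈ Finset.range p, a ^ i * ((-b) ^ (p - 1 - i) - a ^ (p - 1 - i))
          = a ^ i * (-b) ^ (p - 1 - i) - a ^ i * a ^ (p - 1 - i))]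
      rw [Finset.sum_sub_distrib]
      have h2 : ∑ i ∈ Finset.range p, a ^ i * a ^ (p - 1 - i)
          = (p : ℤ) * a ^ (p - 1) := by
        rw [Finset.sum_congr rfl (fun i hi => ?_), Finset.sum_const, Finset.card_range,
          nsmul_eq_mul]
        rw [← pow_add]
        congr 1
        have := Finset.mem_range.mp hi
        omega
      rw [h2]
    rw [key]
    refine Finset.dvd_sum fun i _ => Dvd.dvd.mul_left ?_ _
    have := sub_dvd_pow_sub_pow (-b) a (p - 1 - i)
    have hne : (-b) - a = -(a + b) := by ring
    rw [hne] at this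
    exact neg_dvd.mp this
  have hpab : ¬ (p : ℤ) ∣ (a + b) := by
    intro hd
    have h5 : (p : ℤ) ∣ c ^ p := by
      rw [← hQ]; exact Dvd.dvd.mul_left hd Q
    exact hpc (hpZ.dvd_of_dvd_pow h5)
  have hcopa : IsCoprime (a + b) a := by
    have := (hab.symm.add_mul_right_left 1)
    rwa [one_mul, add_comm b a] at this
  have h1 : IsCoprime (a + b) ((p : ℤ) * a ^ (p - 1)) :=
    ((hpZ.coprime_iff_not_dvd.mpr hpab).symm).mul_right hcopa.pow_right
  have hcop : IsCoprime (a + b) Q := by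
    obtain ⟨k, hk⟩ := hdvd
    have hQeq : Q = (p : ℤ) * a ^ (p - 1) + (a + b) * k := by linarith
    rw [hQeq]
    exact h1.add_mul_left_right k
  obtain ⟨t, ht⟩ := Int.eq_pow_of_mul_eq_pow_odd_left hcop hodd
    (by rw [mul_comm]; exact hQ)
  refine ⟨t, ht, ?_⟩
  have hzmod : ((t : ZMod p)) = (c : ZMod p) := by
    have e1 : ((t : ZMod p)) = (t : ZMod p) ^ p := (ZMod.pow_card _).symm
    have e2 : ((a : ZMod p) + b) = (t : ZMod p) ^ p := by
      have := congrArg (Int.cast : ℤ → ZMod p) ht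
      push_cast at this
      exact this
    have e3 : ((a : ZMod p) + b) = (a : ZMod p) ^ p + (b : ZMod p) ^ p := by
      rw [ZMod.pow_card, ZMod.pow_card]
    have e4 : (a : ZMod p) ^ p + (b : ZMod p) ^ p = (c : ZMod p) ^ p := by
      have := congrArg (Int.cast : ℤ → ZMod p) h
      push_cast at this
      exact this
    rw [e1, ← e2, e3, e4, ZMod.pow_card]
  have := (ZMod.intCast_eq_intCast_iff t c p).mp hzmod
  exact Int.ModEq.dvd this.symm

theorem stmt_8 (p : ℕ) (hp : p.Prime) (x y z : ℤ)
    (hx : x ≠ 0) (hy : y ≠ 0) (hz : z ≠ 0)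
    (hxy : IsCoprime x y) (hxz : IsCoprime x z) (hyz : IsCoprime y z)
    (hfermat : x ^ p + y ^ p = z ^ p) (hpxyz : ¬ (p : ℤ) ∣ x * y * z) :
    x + y - z ≡ 0 [ZMOD (p : ℤ) ^ 2] := by
  have hpx : ¬ (p : ℤ) ∣ x := fun h => hpxyz ((h.mul_right y).mul_right z)
  have hpy : ¬ (p : ℤ) ∣ y := fun h => hpxyz ((h.mul_left x).mul_right z)
  have hpz : ¬ (p : ℤ) ∣ z := fun h => hpxyz (h.mul_left (x * y))
  rcases eq_or_ne p 2 with hp2 | hp2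
  · exfalso
    subst hp2
    have hxo : x % 2 = 1 := by omega
    have hyo : y % 2 = 1 := by omega
    have hzo : z % 2 = 1 := by omega
    have h1 : x ^ 2 % 4 = 1 := Int.sq_mod_four_eq_one_of_odd (Int.odd_iff.mpr hxo)
    have h2 : y ^ 2 % 4 = 1 := Int.sq_mod_four_eq_one_of_odd (Int.odd_iff.mpr hyo)
    have h3 : z ^ 2 % 4 = 1 := Int.sq_mod_four_eq_one_of_odd (Int.odd_iff.mpr hzo)
    omega
  have hodd : Odd p := hp.odd_of_ne_two hp2
  obtain ⟨t, ht, htz⟩ := barlow p hp hodd x y z hxy hfermat hpz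
  obtain ⟨u, hu, huy⟩ := barlow p hp hodd z (-x) y (hxz.symm.neg_right)
    (by rw [hodd.neg_pow]; linarith) hpy
  obtain ⟨v, hv, hvx⟩ := barlow p hp hodd z (-y) x (hyz.symm.neg_right)
    (by rw [hodd.neg_pow]; linarith) hpx
  have d1 : ((p : ℤ)) ^ 2 ∣ t ^ p - z ^ p := by
    have := dvd_sub_pow_of_dvd_sub htz 1
    simpa using this
  have d2 : ((p : ℤ)) ^ 2 ∣ u ^ p - y ^ p := by
    have := dvd_sub_pow_of_dvd_sub huy 1
    simpa using this
  have d3 : ((p : ℤ)) ^ 2 ∣ v ^ p - x ^ p := by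
    have := dvd_sub_pow_of_dvd_sub hvx 1
    simpa using this
  have dsum : ((p : ℤ)) ^ 2 ∣ (x + y - z) * 2 := by
    have heq : (x + y - z) * 2 = (t ^ p - z ^ p) - (u ^ p - y ^ p) - (v ^ p - x ^ p) := by
      rw [← ht, ← hu, ← hv, ← hfermat]; ring
    rw [heq]
    exact dvd_sub (dvd_sub d1 d2) d3
  have hcop2 : IsCoprime ((p : ℤ) ^ 2) 2 := by
    have hpnd : ¬ (p : ℤ) ∣ 2 := by
      intro hdvd
      have hle : (p : ℤ) ≤ 2 := Int.le_of_dvd (by norm_num) hdvd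
      have h2 := hp.two_le
      omega
    exact (((Nat.prime_iff_prime_int.mp hp).coprime_iff_not_dvd).mpr hpnd).pow_left
  have hfin : ((p : ℤ)) ^ 2 ∣ x + y - z := hcop2.dvd_of_dvd_mul_right dsum
  simpa [Int.ModEq, Int.emod_emod_of_dvd, Int.modEq_zero_iff_dvd] using
    (Int.modEq_zero_iff_dvd).mpr hfin
end

section
/- If p is a prime and x, y, z are pairwise coprime nonzero integers with x^p + y^p = z^p and p ∤ xyz, then x^(p-1) ≡ 1 (mod p^2), y^(p-1) ≡ 1 (mod p^2), and z^(p-1) ≡ 1 (mod p^2). -/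
/-!
Factor `z ^ p - y ^ p = (z - y) * S` with `S = ∑ zⁱ y^(p-1-i)`. Since `p ∤ x`, also `p ∤ z - y`,
and `S ≡ p y^(p-1) (mod z - y)` makes the two factors coprime, so `S = s ^ p` (`p` odd).
By Fermat `z - y ≡ x ^ p ≡ x (mod p)`, whence `S ≡ 1` and `s ≡ 1 (mod p)`, so `s ^ p ≡ 1 (mod p²)`
and `x ^ p ≡ z - y (mod p²)`. Together with `y ^ p ≡ z - x` and `z ^ p ≡ x + y` (apply the same
to `z ^ p = x ^ p - (-y) ^ p`), summing gives `2 (x + y - z) ≡ 0`, so `z ≡ x + y (mod p²)`, and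
then `v ^ p ≡ v (mod p²)` for `v = x, y, z`; cancel one `v`.
-/

open Finset

theorem sub_dvd_geom_sum₂_sub {R : Type*} [CommRing R] (x y : R) (n : ℕ) :
    x - y ∣ ∑ i ∈ range n, x ^ i * y ^ (n - 1 - i) - n * y ^ (n - 1) := by
  have hxy : Ideal.Quotient.mk (Ideal.span {x - y}) x = Ideal.Quotient.mk _ y :=
    Ideal.Quotient.eq.mpr (Ideal.mem_span_singleton_self _)
  rw [← Ideal.mem_span_singleton, ← Ideal.Quotient.eq]
  simp only [RingHom.map_geom_sum₂, hxy, geom_sum₂_self, map_mul, map_pow, map_natCast]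

theorem IsCoprime.sub_geom_sum₂ {R : Type*} [CommRing R] {x y : R} (hxy : IsCoprime x y) {n : ℕ}
    (hn : IsCoprime (x - y) n) : IsCoprime (x - y) (∑ i ∈ range n, x ^ i * y ^ (n - 1 - i)) := by
  obtain ⟨k, hk⟩ := sub_dvd_geom_sum₂_sub x y n
  have hy : IsCoprime (x - y) y := by
    simpa using (IsCoprime.sub_mul_right_left_iff (z := (1 : R))).mpr hxy
  rw [sub_eq_iff_eq_add'.mp hk]
  exact (hn.mul_right hy.pow_right).add_mul_left_right k

theorem intCast_geom_sum₂_eq_one {p : ℕ} [Fact p.Prime] {a b c : ℤ}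
    (hc : ¬ (p : ℤ) ∣ c) (h : c ^ p = a ^ p - b ^ p) :
    ((∑ i ∈ range p, a ^ i * b ^ (p - 1 - i) : ℤ) : ZMod p) = 1 := by
  have hc0 : (c : ZMod p) ≠ 0 := by rwa [Ne, ZMod.intCast_zmod_eq_zero_iff_dvd]
  have hcp : (c : ZMod p) ^ p = (a : ZMod p) ^ p - (b : ZMod p) ^ p := by
    exact_mod_cast congrArg (Int.cast : ℤ → ZMod p) h
  -- Frobenius: `c = a - b` in `ZMod p`, and `(a - b) * S = a ^ p - b ^ p = c`.
  have hS : (c : ZMod p) * ((∑ i ∈ range p, a ^ i * b ^ (p - 1 - i) : ℤ) : ZMod p) = c := by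
    have hfrob : (c : ZMod p) = a - b := by simpa only [ZMod.pow_card] using hcp
    push_cast
    rw [mul_comm, hfrob, geom_sum₂_mul, ← hcp, ZMod.pow_card, hfrob]
  exact mul_left_cancel₀ hc0 (hS.trans (mul_one _).symm)

theorem pow_modEq_sub_of_pow_eq_pow_sub_pow {p : ℕ} (hp : p.Prime) (hodd : Odd p) {a b c : ℤ}
    (hab : IsCoprime a b) (hc : ¬ (p : ℤ) ∣ c) (h : c ^ p = a ^ p - b ^ p) :
    c ^ p ≡ a - b [ZMOD (p : ℤ) ^ 2] := by
  have : Fact p.Prime := ⟨hp⟩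
  set S := ∑ i ∈ range p, a ^ i * b ^ (p - 1 - i)
  have hdS : (a - b) * S = c ^ p := by rw [h, mul_comm, geom_sum₂_mul]
  have hpd : ¬ (p : ℤ) ∣ a - b := fun hd =>
    hc ((Nat.prime_iff_prime_int.mp hp).dvd_of_dvd_pow (hdS ▸ hd.mul_right S))
  have hcop : IsCoprime (a - b) S :=
    hab.sub_geom_sum₂ ((Nat.prime_iff_prime_int.mp hp).coprime_iff_not_dvd.mpr hpd).symm
  obtain ⟨s, hs⟩ := Int.eq_pow_of_mul_eq_pow_odd_right hcop hodd hdS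
  have hs1 : (p : ℤ) ∣ s - 1 := by
    rw [← ZMod.intCast_zmod_eq_zero_iff_dvd, Int.cast_sub, Int.cast_one, sub_eq_zero,
      ← ZMod.pow_card (s : ZMod p), ← Int.cast_pow, ← hs, intCast_geom_sum₂_eq_one hc h]
  have hsp : (p : ℤ) ^ 2 ∣ s ^ p - 1 := by simpa using dvd_sub_pow_of_dvd_sub hs1 1
  refine (Int.modEq_iff_dvd.mpr ?_).symm
  rw [← hdS, hs, ← mul_sub_one]
  exact dvd_mul_of_dvd_right hsp _

theorem pow_add_pow_ne_pow_of_odd {x y z : ℤ} (hx : Odd x) (hy : Odd y) (hz : Odd z) (n : ℕ) :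
    x ^ n + y ^ n ≠ z ^ n := fun h =>
  Int.not_even_iff_odd.mpr hz.pow (h ▸ hx.pow.add_odd hy.pow)

theorem Int.ModEq.pow_sub_one_modEq_one {n v : ℤ} {k : ℕ} (hk : k ≠ 0) (hv : IsCoprime n v)
    (h : v ^ k ≡ v [ZMOD n]) : v ^ (k - 1) ≡ 1 [ZMOD n] := by
  refine (Int.modEq_iff_dvd.mpr (hv.dvd_of_dvd_mul_left ?_)).symm
  rw [mul_sub_one, ← pow_succ', Nat.sub_add_cancel (Nat.one_le_iff_ne_zero.mpr hk)]
  exact h.symm.dvd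

theorem pow_modEq_self_of_pow_add_pow_eq_pow {p : ℕ} (hp : p.Prime) (hodd : Odd p) {x y z : ℤ}
    (hxy : IsCoprime x y) (hxz : IsCoprime x z) (hyz : IsCoprime y z)
    (hfermat : x ^ p + y ^ p = z ^ p) (hpx : ¬ (p : ℤ) ∣ x) (hpy : ¬ (p : ℤ) ∣ y)
    (hpz : ¬ (p : ℤ) ∣ z) :
    x ^ p ≡ x [ZMOD (p : ℤ) ^ 2] ∧ y ^ p ≡ y [ZMOD (p : ℤ) ^ 2] ∧ z ^ p ≡ z [ZMOD (p : ℤ) ^ 2] := by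
  have hx : x ^ p ≡ z - y [ZMOD (p : ℤ) ^ 2] :=
    pow_modEq_sub_of_pow_eq_pow_sub_pow hp hodd hyz.symm hpx (by linear_combination hfermat)
  have hy : y ^ p ≡ z - x [ZMOD (p : ℤ) ^ 2] :=
    pow_modEq_sub_of_pow_eq_pow_sub_pow hp hodd hxz.symm hpy (by linear_combination hfermat)
  have hz : z ^ p ≡ x - -y [ZMOD (p : ℤ) ^ 2] :=
    pow_modEq_sub_of_pow_eq_pow_sub_pow hp hodd hxy.neg_right hpz
      (by rw [hodd.neg_pow]; linear_combination -hfermat)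
  have h2 : (p : ℤ) ^ 2 ∣ 2 * (z - (x + y)) :=
    (dvd_sub (dvd_add hx.dvd hy.dvd) hz.dvd).trans
      (dvd_of_eq (by linear_combination -hfermat))
  have hsum : x + y ≡ z [ZMOD (p : ℤ) ^ 2] := Int.modEq_iff_dvd.mpr
    ((Int.isCoprime_two_right.mpr (hodd.natCast.pow)).dvd_of_dvd_mul_left h2)
  refine ⟨hx.trans ?_, hy.trans ?_, hz.trans ?_⟩
  · simpa using (hsum.sub_right y).symm
  · simpa using (hsum.sub_right x).symm
  · simpa using hsum

theorem stmt_9_general (p : ℕ) (hp : p.Prime) (x y z : ℤ)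
    (hxy : IsCoprime x y) (hxz : IsCoprime x z) (hyz : IsCoprime y z)
    (hfermat : x ^ p + y ^ p = z ^ p) (hpxyz : ¬ (p : ℤ) ∣ x * y * z) :
    x ^ (p - 1) ≡ 1 [ZMOD (p : ℤ) ^ 2] ∧ y ^ (p - 1) ≡ 1 [ZMOD (p : ℤ) ^ 2] ∧
      z ^ (p - 1) ≡ 1 [ZMOD (p : ℤ) ^ 2] := by
  have hpx : ¬ (p : ℤ) ∣ x := fun h => hpxyz ((h.mul_right y).mul_right z)
  have hpy : ¬ (p : ℤ) ∣ y := fun h => hpxyz ((h.mul_left x).mul_right z)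
  have hpz : ¬ (p : ℤ) ∣ z := fun h => hpxyz (h.mul_left (x * y))
  have hodd : Odd p := hp.odd_of_ne_two <| by
    rintro rfl
    have odd_of_not_dvd {v : ℤ} (hv : ¬ ((2 : ℕ) : ℤ) ∣ v) : Odd v :=
      Int.not_even_iff_odd.mp (fun he => hv he.two_dvd)
    exact pow_add_pow_ne_pow_of_odd (odd_of_not_dvd hpx) (odd_of_not_dvd hpy)
      (odd_of_not_dvd hpz) 2 hfermat
  have hcop {v : ℤ} (hv : ¬ (p : ℤ) ∣ v) : IsCoprime ((p : ℤ) ^ 2) v :=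
    ((Nat.prime_iff_prime_int.mp hp).coprime_iff_not_dvd.mpr hv).pow_left
  obtain ⟨hx, hy, hz⟩ :=
    pow_modEq_self_of_pow_add_pow_eq_pow hp hodd hxy hxz hyz hfermat hpx hpy hpz
  exact ⟨hx.pow_sub_one_modEq_one hp.ne_zero (hcop hpx),
    hy.pow_sub_one_modEq_one hp.ne_zero (hcop hpy), hz.pow_sub_one_modEq_one hp.ne_zero (hcop hpz)⟩

theorem stmt_9 (p : ℕ) (hp : p.Prime) (x y z : ℤ)
    (hx : x ≠ 0) (hy : y ≠ 0) (hz : z ≠ 0)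
    (hxy : IsCoprime x y) (hxz : IsCoprime x z) (hyz : IsCoprime y z)
    (hfermat : x ^ p + y ^ p = z ^ p) (hpxyz : ¬ (p : ℤ) ∣ x * y * z) :
    x ^ (p - 1) ≡ 1 [ZMOD (p : ℤ) ^ 2] ∧ y ^ (p - 1) ≡ 1 [ZMOD (p : ℤ) ^ 2] ∧
      z ^ (p - 1) ≡ 1 [ZMOD (p : ℤ) ^ 2] :=
  stmt_9_general p hp x y z hxy hxz hyz hfermat hpxyz
end

section
/- If p is a prime ≥ 3 and x, y, z are pairwise coprime nonzero integers with x^p + y^p = z^p and p ∤ xyz, then p^3 divides (x+y)^p - x^p - y^p. -/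
open Finset

private lemma int_fermat_little (p : ℕ) (hp : p.Prime) (n : ℤ) : (p : ℤ) ∣ n ^ p - n := by
  haveI := Fact.mk hp
  have h : ((n ^ p - n : ℤ) : ZMod p) = 0 := by
    push_cast
    rw [ZMod.pow_card, sub_self]
  exact (ZMod.intCast_zmod_eq_zero_iff_dvd _ _).mp h

private lemma geom_sub_dvd (p : ℕ) (a b : ℤ) :
    (a - b) ∣ (∑ i ∈ Finset.range p, a ^ i * b ^ (p - 1 - i)) - (p : ℤ) * b ^ (p - 1) := by
  have hb : ∀ i ∈ Finset.range p, b ^ i * b ^ (p - 1 - i) = b ^ (p - 1) := by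
    intro i hi
    rw [← pow_add]
    congr 1
    have := Finset.mem_range.mp hi
    omega
  have hsum : ∑ i ∈ Finset.range p, (a ^ i - b ^ i) * b ^ (p - 1 - i)
      = (∑ i ∈ Finset.range p, a ^ i * b ^ (p - 1 - i)) - (p : ℤ) * b ^ (p - 1) := by
    calc ∑ i ∈ Finset.range p, (a ^ i - b ^ i) * b ^ (p - 1 - i)
        = ∑ i ∈ Finset.range p,
            (a ^ i * b ^ (p - 1 - i) - b ^ i * b ^ (p - 1 - i)) := by
          simp [sub_mul]
      _ = (∑ i ∈ Finset.range p, a ^ i * b ^ (p - 1 - i))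
            - ∑ i ∈ Finset.range p, b ^ i * b ^ (p - 1 - i) := by
          rw [Finset.sum_sub_distrib]
      _ = (∑ i ∈ Finset.range p, a ^ i * b ^ (p - 1 - i)) - (p : ℤ) * b ^ (p - 1) := by
          rw [Finset.sum_congr rfl hb, Finset.sum_const, Finset.card_range, nsmul_eq_mul]
  rw [← hsum]
  exact Finset.dvd_sum fun i _ => Dvd.dvd.mul_right (sub_dvd_pow_sub_pow a b i) _

private lemma pow_step (p : ℕ) (a b : ℤ) (k : ℕ)
    (h1 : (p : ℤ) ∣ a - b) (hk : (p : ℤ) ^ k ∣ a - b) :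
    (p : ℤ) ^ (k + 1) ∣ a ^ p - b ^ p := by
  have hgeom := geom_sum₂_mul a b p
  set S : ℤ := ∑ i ∈ Finset.range p, a ^ i * b ^ (p - 1 - i) with hSdef
  have hpS : (p : ℤ) ∣ S := by
    have h2 : (p : ℤ) ∣ S - (p : ℤ) * b ^ (p - 1) := dvd_trans h1 (geom_sub_dvd p a b)
    simpa using dvd_add h2 (dvd_mul_right (p : ℤ) (b ^ (p - 1)))
  rw [← hgeom]
  have h3 := mul_dvd_mul hpS hk
  rwa [show (p : ℤ) ^ (k + 1) = (p : ℤ) * (p : ℤ) ^ k by ring]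

private lemma key_lemma (p : ℕ) (hp : p.Prime) (hodd : Odd p) (u v w : ℤ)
    (hcop : IsCoprime u v) (hw : w ^ p = u ^ p - v ^ p) (hpw : ¬ (p : ℤ) ∣ w) :
    (p : ℤ) ^ 2 ∣ w ^ p - (u - v) := by
  have hpi : Prime (p : ℤ) := Nat.prime_iff_prime_int.mp hp
  set S : ℤ := ∑ i ∈ Finset.range p, u ^ i * v ^ (p - 1 - i) with hSdef
  have hgeom : S * (u - v) = w ^ p := by rw [hw]; exact geom_sum₂_mul u v p
  have hpd : ¬ (p : ℤ) ∣ (u - v) := by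
    intro h
    exact hpw (hpi.dvd_of_dvd_pow (by rw [← hgeom]; exact h.mul_left S))
  obtain ⟨m, hm⟩ := geom_sub_dvd p u v
  have hc1 : IsCoprime (u - v) v := by
    have h := hcop.add_mul_left_left (-1)
    rwa [mul_neg_one, ← sub_eq_add_neg] at h
  have hc2 : IsCoprime (u - v) (p : ℤ) := ((hpi.coprime_iff_not_dvd).mpr hpd).symm
  have hcS : IsCoprime (u - v) S := by
    have hmul : IsCoprime (u - v) ((p : ℤ) * v ^ (p - 1)) := hc2.mul_right (hc1.pow_right)
    have hS' : S = (p : ℤ) * v ^ (p - 1) + (u - v) * m := by linarith [hm]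
    rw [hS']
    exact hmul.add_mul_left_right m
  obtain ⟨e, he⟩ : ∃ e : ℤ, S = e ^ p :=
    Int.eq_pow_of_mul_eq_pow_odd_right hcS hodd (by rw [mul_comm]; exact hgeom)
  have h1 : (p : ℤ) ∣ (u - v) * (S - 1) := by
    have f1 := int_fermat_little p hp u
    have f2 := int_fermat_little p hp v
    have heq : (u - v) * (S - 1) = (u ^ p - u) - (v ^ p - v) := by
      linear_combination hgeom + hw
    rw [heq]
    exact dvd_sub f1 f2
  have hS1 : (p : ℤ) ∣ S - 1 := by
    rcases (hpi.dvd_mul).mp h1 with h | h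
    · exact absurd h hpd
    · exact h
  have he1 : (p : ℤ) ∣ e - 1 := by
    have f := int_fermat_little p hp e
    have h2 : (p : ℤ) ∣ e ^ p - 1 := by rwa [← he]
    have h3 := dvd_sub h2 f
    rwa [show (e ^ p - 1) - (e ^ p - e) = e - 1 by ring] at h3
  have hS2 : (p : ℤ) ^ 2 ∣ S - 1 := by
    have h4 := pow_step p e 1 1 he1 (by simpa using he1)
    simpa [he, one_pow] using h4
  have hfin : w ^ p - (u - v) = (u - v) * (S - 1) := by linear_combination -hgeom
  rw [hfin]
  exact Dvd.dvd.mul_left hS2 (u - v)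

theorem stmt_10 (p : ℕ) (hp : p.Prime) (hp3 : 3 ≤ p) (x y z : ℤ)
    (hx : x ≠ 0) (hy : y ≠ 0) (hz : z ≠ 0)
    (hxy : IsCoprime x y) (hxz : IsCoprime x z) (hyz : IsCoprime y z)
    (hfermat : x ^ p + y ^ p = z ^ p) (hpxyz : ¬ (p : ℤ) ∣ x * y * z) :
    (p : ℤ) ^ 3 ∣ (x + y) ^ p - x ^ p - y ^ p := by
  have hodd : Odd p := hp.odd_of_ne_two (by omega)
  have hpi : Prime (p : ℤ) := Nat.prime_iff_prime_int.mp hp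
  have hpx : ¬ (p : ℤ) ∣ x := fun h => hpxyz ((h.mul_right y).mul_right z)
  have hpy : ¬ (p : ℤ) ∣ y := fun h => hpxyz ((h.mul_left x).mul_right z)
  have hpz : ¬ (p : ℤ) ∣ z := fun h => hpxyz (h.mul_left (x * y))
  have k1 := key_lemma p hp hodd z y x hyz.symm (by linarith) hpx
  have k2 := key_lemma p hp hodd z x y hxz.symm (by linarith) hpy
  have k3 := key_lemma p hp hodd x (-y) z hxy.neg_right
    (by rw [hodd.neg_pow, sub_neg_eq_add]; exact hfermat.symm) hpz
  have hsum : (p : ℤ) ^ 2 ∣ 2 * ((x + y) - z) := by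
    have h := (k1.add k2).sub k3
    have heq : (x ^ p - (z - y)) + (y ^ p - (z - x)) - (z ^ p - (x - -y))
        = 2 * ((x + y) - z) := by linear_combination hfermat
    rwa [heq] at h
  have h2 : IsCoprime ((p : ℤ) ^ 2) 2 := by
    have hnd : ¬ (p : ℤ) ∣ 2 := by
      intro h
      have h5 := Int.le_of_dvd (by norm_num) h
      have h6 : (3 : ℤ) ≤ (p : ℤ) := by exact_mod_cast hp3
      omega
    exact ((hpi.coprime_iff_not_dvd).mpr hnd).pow_left
  have hsz : (p : ℤ) ^ 2 ∣ (x + y) - z := h2.dvd_of_dvd_mul_left hsum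
  have hfinal := pow_step p (x + y) z 2
    ((dvd_pow_self (p : ℤ) (by norm_num : (2 : ℕ) ≠ 0)).trans hsz) hsz
  have heq2 : (x + y) ^ p - x ^ p - y ^ p = (x + y) ^ p - z ^ p := by
    rw [← hfermat]; ring
  rw [heq2]
  exact hfinal
end

section
/- If p is a prime ≥ 3 and x, y, z are pairwise coprime nonzero integers with x^p + y^p = z^p and p ∤ xyz, then p^2 divides ((x+y)^p - x^p - y^p)/(p·x·y·(x+y)). -/
open Finset

/-- Fermat's little theorem for integers. -/
private lemma flt_little {p : ℕ} (hp : p.Prime) (a : ℤ) : (p : ℤ) ∣ a ^ p - a := by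
  haveI : Fact p.Prime := ⟨hp⟩
  have h : ((a ^ p - a : ℤ) : ZMod p) = 0 := by
    push_cast
    rw [ZMod.pow_card]
    ring
  exact (ZMod.intCast_zmod_eq_zero_iff_dvd _ _).mp h

/-- The geometric sum `∑ a^i b^(p-1-i)` is congruent to `p * b^(p-1)` mod any
divisor of `a - b`. -/
private lemma geom_mod (p : ℕ) {a b m : ℤ} (h : m ∣ a - b) :
    m ∣ (∑ i ∈ Finset.range p, a ^ i * b ^ (p - 1 - i)) - (p : ℤ) * b ^ (p - 1) := by
  have key : (∑ i ∈ Finset.range p, a ^ i * b ^ (p - 1 - i)) - (p : ℤ) * b ^ (p - 1)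
      = ∑ i ∈ Finset.range p, (a ^ i - b ^ i) * b ^ (p - 1 - i) := by
    have h2 : ∀ i ∈ Finset.range p, (a ^ i - b ^ i) * b ^ (p - 1 - i)
        = a ^ i * b ^ (p - 1 - i) - b ^ (p - 1) := by
      intro i hi
      rw [Finset.mem_range] at hi
      have : b ^ i * b ^ (p - 1 - i) = b ^ (p - 1) := by
        rw [← pow_add]
        congr 1
        omega
      rw [sub_mul, this]
    rw [Finset.sum_congr rfl h2, Finset.sum_sub_distrib, Finset.sum_const,
      Finset.card_range, nsmul_eq_mul]
  rw [key]
  exact Finset.dvd_sum fun i _ =>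
    Dvd.dvd.mul_right (dvd_trans h (sub_dvd_pow_sub_pow a b i)) _

/-- Barlow-style relation: if `a^p - b^p = w^p` with the two factors of
`a^p - b^p` coprime and `p ∤ w`, then `w^p ≡ a - b (mod p^2)`. -/
private lemma barlow_s11 {p : ℕ} (hp : p.Prime) (hp3 : 3 ≤ p) (a b w : ℤ)
    (hw : ¬ (p : ℤ) ∣ w)
    (hab : IsCoprime (a - b) (∑ i ∈ Finset.range p, a ^ i * b ^ (p - 1 - i)))
    (h : a ^ p - b ^ p = w ^ p) :
    (p : ℤ) ^ 2 ∣ w ^ p - (a - b) := by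
  have hpI : Prime (p : ℤ) := Nat.prime_iff_prime_int.mp hp
  set S : ℤ := ∑ i ∈ Finset.range p, a ^ i * b ^ (p - 1 - i) with hSdef
  have hfac : (a - b) * S = w ^ p := by
    rw [← h, mul_comm]
    exact geom_sum₂_mul a b p
  obtain ⟨T, hT⟩ := Int.eq_pow_of_mul_eq_pow_odd_right hab
    (hp.odd_of_ne_two (by omega)) hfac
  -- p ∣ S - 1
  have hwS : (p : ℤ) ∣ w - (a - b) := by
    have h1 := flt_little hp a
    have h2 := flt_little hp b
    have h3 := flt_little hp w
    have : w - (a - b) = (a ^ p - a) - (b ^ p - b) - (w ^ p - w) := by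
      rw [← h]; ring
    rw [this]
    exact dvd_sub (dvd_sub h1 h2) h3
  have hS1 : (p : ℤ) ∣ S - 1 := by
    have hd : (p : ℤ) ∣ w * (S - 1) := by
      have : w * (S - 1) = (w - (a - b)) * S + (w ^ p - w) := by
        rw [← hfac]; ring
      rw [this]
      exact dvd_add (hwS.mul_right S) (flt_little hp w)
    exact (hpI.dvd_mul.mp hd).resolve_left hw
  have hT1 : (p : ℤ) ∣ T - 1 := by
    have : T - 1 = (S - 1) - (T ^ p - T) := by rw [hT]; ring
    rw [this]
    exact dvd_sub hS1 (flt_little hp T)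
  have hsum : (p : ℤ) ∣ ∑ i ∈ Finset.range p, T ^ i := by
    have key : (∑ i ∈ Finset.range p, T ^ i) - (p : ℤ)
        = ∑ i ∈ Finset.range p, (T ^ i - 1) := by
      rw [Finset.sum_sub_distrib, Finset.sum_const, Finset.card_range,
        nsmul_eq_mul, mul_one]
    have hd : (p : ℤ) ∣ ∑ i ∈ Finset.range p, (T ^ i - 1) :=
      Finset.dvd_sum fun i _ => dvd_trans hT1 (by
        simpa using sub_dvd_pow_sub_pow T 1 i)
    have : (∑ i ∈ Finset.range p, T ^ i) = ((∑ i ∈ Finset.range p, T ^ i) - p) + p := by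
      ring
    rw [this, key]
    exact dvd_add hd dvd_rfl
  have hS2 : (p : ℤ) ^ 2 ∣ S - 1 := by
    have : S - 1 = (∑ i ∈ Finset.range p, T ^ i) * (T - 1) := by
      rw [hT, geom_sum_mul]
    rw [this, sq]
    exact mul_dvd_mul hsum hT1
  have : w ^ p - (a - b) = (a - b) * (S - 1) := by rw [← hfac]; ring
  rw [this]
  exact hS2.mul_left _

theorem stmt_11 (p : ℕ) (hp : p.Prime) (hp3 : 3 ≤ p) (x y z : ℤ)
    (hx : x ≠ 0) (hy : y ≠ 0) (hz : z ≠ 0)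
    (hxy : IsCoprime x y) (hxz : IsCoprime x z) (hyz : IsCoprime y z)
    (hfermat : x ^ p + y ^ p = z ^ p) (hpxyz : ¬ (p : ℤ) ∣ x * y * z) :
    (p : ℤ) ^ 2 ∣ ((x + y) ^ p - x ^ p - y ^ p) / ((p : ℤ) * x * y * (x + y)) := by
  have hpI : Prime (p : ℤ) := Nat.prime_iff_prime_int.mp hp
  have hodd : Odd p := hp.odd_of_ne_two (by omega)
  -- p does not divide x, y, z
  have hpx : ¬ (p : ℤ) ∣ x := fun h => hpxyz ((h.mul_right y).mul_right z)
  have hpy : ¬ (p : ℤ) ∣ y := fun h => hpxyz ((h.mul_left x).mul_right z)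
  have hpz : ¬ (p : ℤ) ∣ z := fun h => hpxyz (h.mul_left (x * y))
  -- p does not divide x + y, z - y, z - x
  -- the vanishing combination
  have hfz : z ^ p - x ^ p - y ^ p = 0 := by rw [← hfermat]; ring
  have hlx := flt_little hp x
  have hly := flt_little hp y
  have hlz := flt_little hp z
  have hpxy : ¬ (p : ℤ) ∣ x + y := by
    intro h
    apply hpz
    have key : z = (x + y) + (x ^ p - x) + (y ^ p - y) - (z ^ p - z)
        + (z ^ p - x ^ p - y ^ p) := by ring
    rw [hfz, add_zero] at key
    rw [key]
    exact dvd_sub (dvd_add (dvd_add h hlx) hly) hlz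
  have hpzy : ¬ (p : ℤ) ∣ z - y := by
    intro h
    apply hpx
    have key : x = (z - y) - (x ^ p - x) + (z ^ p - z) - (y ^ p - y)
        - (z ^ p - x ^ p - y ^ p) := by ring
    rw [hfz, sub_zero] at key
    rw [key]
    exact dvd_sub (dvd_add (dvd_sub h hlx) hlz) hly
  have hpzx : ¬ (p : ℤ) ∣ z - x := by
    intro h
    apply hpy
    have key : y = (z - x) - (y ^ p - y) + (z ^ p - z) - (x ^ p - x)
        - (z ^ p - x ^ p - y ^ p) := by ring
    rw [hfz, sub_zero] at key
    rw [key]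
    exact dvd_sub (dvd_add (dvd_sub h hly) hlz) hlx
  -- generic coprimality of (a - b) with the geometric sum
  have cop : ∀ a b : ℤ, ¬ (p : ℤ) ∣ a - b → IsCoprime (a - b) b →
      IsCoprime (a - b) (∑ i ∈ Finset.range p, a ^ i * b ^ (p - 1 - i)) := by
    intro a b hpd hcb
    obtain ⟨k, hk⟩ := geom_mod p (dvd_refl (a - b))
    have hS : (∑ i ∈ Finset.range p, a ^ i * b ^ (p - 1 - i))
        = (p : ℤ) * b ^ (p - 1) + (a - b) * k := by linarith [hk]
    rw [hS]
    refine IsCoprime.add_mul_left_right ?_ k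
    exact IsCoprime.mul_right ((hpI.coprime_iff_not_dvd.mpr hpd).symm)
      (hcb.pow_right)
  -- Instance 1: a = x, b = -y, w = z
  have hnegy : ∀ n : ℕ, Odd n → (-y) ^ n = -(y ^ n) := fun n hn => hn.neg_pow y
  have e1 : x ^ p - (-y) ^ p = z ^ p := by rw [hnegy p hodd]; rw [← hfermat]; ring
  have s1 : x - (-y) = x + y := by ring
  have cop1 : IsCoprime (x - -y) (∑ i ∈ Finset.range p, x ^ i * (-y) ^ (p - 1 - i)) := by
    apply cop
    · rw [sub_neg_eq_add]; exact hpxy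
    · rw [sub_neg_eq_add]
      refine IsCoprime.neg_right ?_
      have h2 := hxy.add_mul_left_left 1
      rwa [mul_one] at h2
  have b1 : (p : ℤ) ^ 2 ∣ z ^ p - (x + y) := by
    have hb := barlow_s11 hp hp3 x (-y) z hpz cop1 e1
    rwa [sub_neg_eq_add] at hb
  -- Instance 2: a = z, b = y, w = x
  have e2 : z ^ p - y ^ p = x ^ p := by rw [← hfermat]; ring
  have cop2 : IsCoprime (z - y) (∑ i ∈ Finset.range p, z ^ i * y ^ (p - 1 - i)) := by
    apply cop _ _ hpzy
    have := hyz.symm.add_mul_left_left (-1)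
    rw [mul_neg_one] at this
    have h2 : z + -y = z - y := by ring
    rw [h2] at this
    exact this
  have b2 : (p : ℤ) ^ 2 ∣ x ^ p - (z - y) := barlow_s11 hp hp3 z y x hpx cop2 e2
  -- Instance 3: a = z, b = x, w = y
  have e3 : z ^ p - x ^ p = y ^ p := by rw [← hfermat]; ring
  have cop3 : IsCoprime (z - x) (∑ i ∈ Finset.range p, z ^ i * x ^ (p - 1 - i)) := by
    apply cop _ _ hpzx
    have := hxz.symm.add_mul_left_left (-1)
    rw [mul_neg_one] at this
    have h2 : z + -x = z - x := by ring
    rw [h2] at this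
    exact this
  have b3 : (p : ℤ) ^ 2 ∣ y ^ p - (z - x) := barlow_s11 hp hp3 z x y hpy cop3 e3
  -- p^2 ∣ x + y - z
  have hp2 : (p : ℤ) ^ 2 ∣ x + y - z := by
    have h2 : (p : ℤ) ^ 2 ∣ (x + y - z) * 2 := by
      have key : (x + y - z) * 2 = (x ^ p - (z - y)) + (y ^ p - (z - x))
          - (z ^ p - (x + y)) + (z ^ p - x ^ p - y ^ p) := by ring
      rw [hfz, add_zero] at key
      rw [key]
      exact dvd_sub (dvd_add b2 b3) b1
    have hcop2 : IsCoprime ((p : ℤ) ^ 2) 2 := by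
      refine IsCoprime.pow_left ?_
      refine hpI.coprime_iff_not_dvd.mpr ?_
      intro h
      have := Int.le_of_dvd (by norm_num) h
      omega
    exact hcop2.dvd_of_dvd_mul_right h2
  -- p^3 divides the numerator N
  set N : ℤ := (x + y) ^ p - x ^ p - y ^ p with hN
  have hNz : N = (x + y) ^ p - z ^ p := by rw [hN, ← hfermat]; ring
  have hp3N : (p : ℤ) ^ 3 ∣ N := by
    obtain ⟨k, hk⟩ := geom_mod p (a := x + y) (b := z) (m := (p : ℤ))
      (dvd_trans (dvd_pow_self (p : ℤ) two_ne_zero) hp2)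
    have hSd : (p : ℤ) ∣ ∑ i ∈ Finset.range p, (x + y) ^ i * z ^ (p - 1 - i) := by
      have : (∑ i ∈ Finset.range p, (x + y) ^ i * z ^ (p - 1 - i))
          = (p : ℤ) * z ^ (p - 1) + (p : ℤ) * k := by linarith [hk]
      rw [this]
      exact dvd_add (Dvd.intro _ rfl) (Dvd.intro _ rfl)
    have hfac : (∑ i ∈ Finset.range p, (x + y) ^ i * z ^ (p - 1 - i)) * ((x + y) - z)
        = (x + y) ^ p - z ^ p := geom_sum₂_mul (x + y) z p
    rw [hNz, ← hfac]
    have : (p : ℤ) ^ 3 = (p : ℤ) * (p : ℤ) ^ 2 := by ring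
    rw [this]
    exact mul_dvd_mul hSd hp2
  -- x, y, x+y divide N
  have hxN : x ∣ N := by
    have h1 : x ∣ (x + y) ^ p - y ^ p := by
      have h0 := sub_dvd_pow_sub_pow (x + y) y p
      rwa [add_sub_cancel_right] at h0
    have : N = ((x + y) ^ p - y ^ p) - x ^ p := by rw [hN]; try ring
    rw [this]
    exact dvd_sub h1 (dvd_pow_self x (by omega))
  have hyN : y ∣ N := by
    have h1 : y ∣ (x + y) ^ p - x ^ p := by
      have h0 := sub_dvd_pow_sub_pow (x + y) x p
      rwa [add_sub_cancel_left] at h0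
    have : N = ((x + y) ^ p - x ^ p) - y ^ p := by rw [hN]; try ring
    rw [this]
    exact dvd_sub h1 (dvd_pow_self y (by omega))
  have hsN : (x + y) ∣ N := by
    have h1 : (x + y) ∣ x ^ p + y ^ p := by
      have := sub_dvd_pow_sub_pow x (-y) p
      rw [hnegy p hodd] at this
      have h2 : x - -y = x + y := by ring
      rw [h2, sub_neg_eq_add] at this
      exact this
    have : N = (x + y) ^ p - (x ^ p + y ^ p) := by rw [hN]; try ring
    rw [this]
    exact dvd_sub (dvd_pow_self _ (by omega)) h1
  -- pairwise coprimality and combination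
  have cxs : IsCoprime x (x + y) := by
    have := hxy.add_mul_left_right 1
    rw [mul_one] at this
    rwa [add_comm y x] at this
  have cys : IsCoprime y (x + y) := by
    have h2 := hxy.symm.add_mul_left_right 1
    rwa [mul_one] at h2
  have cpx : IsCoprime ((p : ℤ) ^ 3) x := (hpI.coprime_iff_not_dvd.mpr hpx).pow_left
  have cpy : IsCoprime ((p : ℤ) ^ 3) y := (hpI.coprime_iff_not_dvd.mpr hpy).pow_left
  have cps : IsCoprime ((p : ℤ) ^ 3) (x + y) := (hpI.coprime_iff_not_dvd.mpr hpxy).pow_left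
  have hys : y * (x + y) ∣ N := cys.mul_dvd hyN hsN
  have hxys : x * (y * (x + y)) ∣ N := (hxy.mul_right cxs).mul_dvd hxN hys
  have hall : (p : ℤ) ^ 3 * (x * (y * (x + y))) ∣ N :=
    (cpx.mul_right (cpy.mul_right cps)).mul_dvd hp3N hxys
  obtain ⟨k, hk⟩ := hall
  -- compute the quotient
  have hs0 : x + y ≠ 0 := by
    intro h
    exact hpxy (h ▸ dvd_zero _)
  have hD : ((p : ℤ) * x * y * (x + y)) ≠ 0 := by
    have hp0 : (p : ℤ) ≠ 0 := Int.natCast_ne_zero.mpr hp.pos.ne'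
    exact mul_ne_zero (mul_ne_zero (mul_ne_zero hp0 hx) hy) hs0
  have hquot : N / ((p : ℤ) * x * y * (x + y)) = (p : ℤ) ^ 2 * k := by
    have : N = ((p : ℤ) * x * y * (x + y)) * ((p : ℤ) ^ 2 * k) := by
      rw [hk]; ring
    rw [this, Int.mul_ediv_cancel_left _ hD]
  rw [hquot]
  exact Dvd.intro k rfl
end

section
/- The first case of Fermat's Last Theorem holds for exponent 5: there are no nonzero pairwise coprime integers x, y, z with x^5 + y^5 = z^5 and 5 ∤ xyz. -/
lemma zmod25_fifth (a b c : ZMod 25) (h : a ^ 5 + b ^ 5 = c ^ 5) :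
    a ^ 5 = 0 ∨ b ^ 5 = 0 ∨ c ^ 5 = 0 := by revert h; revert a b c; decide

lemma fifth_ne (x : ℤ) (hx : ¬ (5 : ℤ) ∣ x) : ((x : ZMod 25)) ^ 5 ≠ 0 := by
  intro h
  apply hx
  have h25 : (25 : ℤ) ∣ x ^ 5 := by
    have := (ZMod.intCast_zmod_eq_zero_iff_dvd (x ^ 5) 25).mp (by push_cast; exact h)
    exact_mod_cast this
  have h5 : (5 : ℤ) ∣ x ^ 5 := dvd_trans (by norm_num) h25
  exact Int.Prime.dvd_pow' (by norm_num) h5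

theorem stmt_15 :
    ¬ ∃ x y z : ℤ, x ≠ 0 ∧ y ≠ 0 ∧ z ≠ 0 ∧
      IsCoprime x y ∧ IsCoprime x z ∧ IsCoprime y z ∧
      x ^ 5 + y ^ 5 = z ^ 5 ∧ ¬ (5 : ℤ) ∣ x * y * z := by
  rintro ⟨x, y, z, -, -, -, -, -, -, heq, hdvd⟩
  have hx : ¬ (5 : ℤ) ∣ x := fun h => hdvd (Dvd.dvd.mul_right (h.mul_right y) z)
  have hy : ¬ (5 : ℤ) ∣ y := fun h => hdvd (Dvd.dvd.mul_right (h.mul_left x) z)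
  have hz : ¬ (5 : ℤ) ∣ z := fun h => hdvd (h.mul_left (x * y))
  have h : ((x : ZMod 25)) ^ 5 + ((y : ZMod 25)) ^ 5 = ((z : ZMod 25)) ^ 5 := by
    have := congrArg (fun n : ℤ => (n : ZMod 25)) heq
    push_cast at this
    exact this
  rcases zmod25_fifth _ _ _ h with h0 | h0 | h0
  · exact fifth_ne x hx h0
  · exact fifth_ne y hy h0
  · exact fifth_ne z hz h0
end

section
/- For any odd integer n ≥ 3, when (x+y)^n - x^n - y^n is written as x·y·(x+y)·Σ_{i=1}^{(n-1)/2} W_{i-1} x^{i-1} y^{i-1} (x+y)^{n-2i-1} with integer coefficients W_j, the first coefficient satisfies W_0 = n and the last satisfies W_{(n-3)/2} = (-1)^{(n-3)/2} · n. -/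
open MvPolynomial Finset

theorem stmt_18 (n : ℕ) (hn : Odd n) (hn3 : 3 ≤ n) (W : ℕ → ℤ)
    (hW : (X 0 + X 1 : MvPolynomial (Fin 2) ℤ) ^ n - X 0 ^ n - X 1 ^ n =
      X 0 * X 1 * (X 0 + X 1) *
        ∑ j ∈ Finset.range ((n - 1) / 2),
          C (W j) * X 0 ^ j * X 1 ^ j * (X 0 + X 1) ^ (n - 2 * j - 3)) :
    W 0 = n ∧ W ((n - 3) / 2) = (-1) ^ ((n - 3) / 2) * n := by
  obtain ⟨m, rfl⟩ : ∃ m, n = 2 * m + 3 := by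
    obtain ⟨k, hk⟩ := hn; exact ⟨k - 1, by omega⟩
  have hm1 : (2 * m + 3 - 1) / 2 = m + 1 := by omega
  have hm2 : (2 * m + 3 - 3) / 2 = m := by omega
  rw [hm1] at hW
  rw [hm2]
  have hP := congrArg (aeval ![(1 : Polynomial ℤ), Polynomial.X - 1]) hW
  simp only [map_add, map_sub, map_mul, map_pow, aeval_X, map_sum,
    Matrix.cons_val_zero, Matrix.cons_val_one, Matrix.head_cons, one_pow, one_mul,
    aeval_C, algebraMap_int_eq, eq_intCast, map_intCast, add_sub_cancel] at hP
  have hX1 : (Polynomial.X - 1 : Polynomial ℤ) = Polynomial.X + Polynomial.C (-1) := by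
    rw [map_neg, Polynomial.C_1, sub_eq_add_neg]
  rw [hX1] at hP
  have hP' : (Polynomial.X : Polynomial ℤ) ^ (2 * m + 3) - 1
      - (Polynomial.X + Polynomial.C (-1)) ^ (2 * m + 3)
      = ∑ j ∈ Finset.range (m + 1),
        Polynomial.C (W j) * ((Polynomial.X + Polynomial.C (-1)) ^ (j + 1) *
          Polynomial.X ^ (2 * (m - j) + 1)) := by
    rw [hP, Finset.mul_sum]
    apply Finset.sum_congr rfl
    intro j hj
    simp only [Finset.mem_range] at hj
    have hC : ((W j : ℤ) : Polynomial ℤ) = Polynomial.C (W j) := (Polynomial.C_eq_intCast _).symm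
    have he : 2 * m + 3 - 2 * j - 3 + 1 = 2 * (m - j) + 1 := by omega
    rw [hC, ← he, pow_succ, pow_succ]
    ring
  constructor
  · -- W 0 = n : take coeff at 2*m+2
    have h2 := congrArg (fun p => p.coeff (2 * m + 2)) hP'
    simp only [Polynomial.coeff_sub, Polynomial.coeff_X_pow, Polynomial.coeff_one,
      Polynomial.finset_sum_coeff, Polynomial.coeff_C_mul, Polynomial.coeff_mul_X_pow',
      Polynomial.coeff_X_add_C_pow] at h2
    rw [Finset.sum_eq_single 0] at h2
    · rw [if_neg (by omega), if_neg (by omega), if_pos (by omega)] at h2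
      rw [show (2 * m + 2 : ℕ) - (2 * (m - 0) + 1) = 1 from by omega,
        show (2 * m + 3 : ℕ) - (2 * m + 2) = 1 from by omega,
        show (0 + 1 : ℕ) - 1 = 0 from by omega] at h2
      simp at h2
      push_cast at h2 ⊢
      omega
    · intro b hb hb0
      simp only [Finset.mem_range] at hb
      rw [if_pos (by omega)]
      rw [show (2 * m + 2 : ℕ) - (2 * (m - b) + 1) = 2 * b + 1 from by omega,
        Nat.choose_eq_zero_of_lt (by omega)]
      simp
    · intro h
      simp at h
  · -- W m : take coeff at 1
    have h1 := congrArg (fun p => p.coeff 1) hP'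
    simp only [Polynomial.coeff_sub, Polynomial.coeff_X_pow, Polynomial.coeff_one,
      Polynomial.finset_sum_coeff, Polynomial.coeff_C_mul, Polynomial.coeff_mul_X_pow',
      Polynomial.coeff_X_add_C_pow] at h1
    rw [Finset.sum_eq_single m] at h1
    · rw [if_neg (by omega), if_neg (by omega), if_pos (by omega)] at h1
      rw [show (2 * m + 3 : ℕ) - 1 = 2 * (m + 1) from by omega,
        show (1 : ℕ) - (2 * (m - m) + 1) = 0 from by omega,
        show (m + 1 : ℕ) - 0 = m + 1 from by omega,
        Nat.choose_one_right, Nat.choose_zero_right, pow_mul] at h1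
      simp at h1
      push_cast at h1 ⊢
      rcases Nat.even_or_odd m with he | he
      · rw [he.neg_one_pow]
        rw [pow_succ, he.neg_one_pow] at h1
        linarith [h1]
      · rw [he.neg_one_pow]
        rw [pow_succ, he.neg_one_pow] at h1
        linarith [h1]
    · intro b hb hbm
      simp only [Finset.mem_range] at hb
      rw [if_neg (by omega)]
      simp
    · intro h
      simp at h
end

section
/- For any prime p ≥ 3, all coefficients W_j in the expansion (x+y)^p - x^p - y^p = x·y·(x+y)·Σ_{i=1}^{(p-1)/2} W_{i-1} x^{i-1} y^{i-1} (x+y)^{p-2i-1} are divisible by p. -/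
open MvPolynomial Finset

theorem stmt_19 (p : ℕ) (hp : p.Prime) (hp3 : 3 ≤ p) (W : ℕ → ℤ)
    (hW : (X 0 + X 1 : MvPolynomial (Fin 2) ℤ) ^ p - X 0 ^ p - X 1 ^ p =
      X 0 * X 1 * (X 0 + X 1) *
        ∑ j ∈ Finset.range ((p - 1) / 2),
          C (W j) * X 0 ^ j * X 1 ^ j * (X 0 + X 1) ^ (p - 2 * j - 3)) :
    ∀ j ∈ Finset.range ((p - 1) / 2), (p : ℤ) ∣ W j := by
  haveI : Fact p.Prime := ⟨hp⟩
  set m := (p - 1) / 2 with hm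
  let φ : MvPolynomial (Fin 2) ℤ →+* Polynomial (ZMod p) :=
    MvPolynomial.eval₂Hom ((Polynomial.C : ZMod p →+* _).comp (Int.castRingHom (ZMod p)))
      ![Polynomial.X, 1]
  have h2 := congrArg φ hW
  simp only [φ, map_sub, map_add, map_mul, map_pow, map_sum,
    MvPolynomial.eval₂Hom_X', MvPolynomial.eval₂Hom_C, RingHom.comp_apply,
    Matrix.cons_val_zero, Matrix.cons_val_one, Matrix.head_cons,
    Int.coe_castRingHom, one_pow] at h2
  have hx : (Polynomial.X * (Polynomial.X + 1) : Polynomial (ZMod p)) ≠ 0 := by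
    have h1 : (Polynomial.X + 1 : Polynomial (ZMod p)) ≠ 0 := by
      have := Polynomial.monic_X_add_C (1 : ZMod p)
      simpa using this.ne_zero
    exact mul_ne_zero Polynomial.X_ne_zero h1
  have hS : (∑ j ∈ range m, (Polynomial.C ((W j : ZMod p))) * Polynomial.X ^ j *
      (Polynomial.X + 1) ^ (p - 2 * j - 3)) = 0 := by
    have h3 : (Polynomial.X * (Polynomial.X + 1) : Polynomial (ZMod p)) *
        (∑ j ∈ range m, (Polynomial.C ((W j : ZMod p))) * Polynomial.X ^ j *
          (Polynomial.X + 1) ^ (p - 2 * j - 3)) = 0 := by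
      simp only [mul_one] at h2
      rw [← h2, add_pow_char]
      ring
    exact (mul_eq_zero.mp h3).resolve_left hx
  intro j hj
  induction j using Nat.strong_induction_on with
  | _ j ih =>
    have hj' : j < m := mem_range.mp hj
    have hcoeff := congrArg (fun q => Polynomial.coeff q j) hS
    simp only [Polynomial.finset_sum_coeff, Polynomial.coeff_zero] at hcoeff
    rw [Finset.sum_eq_single_of_mem j hj] at hcoeff
    · -- remaining term equals W j
      have h4 : (Polynomial.C ((W j : ZMod p)) * Polynomial.X ^ j *
          (Polynomial.X + 1) ^ (p - 2 * j - 3)).coeff j = (W j : ZMod p) := by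
        rw [mul_right_comm, Polynomial.coeff_mul_X_pow', if_pos le_rfl, Nat.sub_self,
          Polynomial.coeff_C_mul, Polynomial.coeff_zero_eq_eval_zero]
        simp
      rw [h4] at hcoeff
      exact (ZMod.intCast_zmod_eq_zero_iff_dvd _ _).mp hcoeff
    · intro k hk hkj
      rcases lt_or_gt_of_ne hkj with hlt | hgt
      · have h0 : (W k : ZMod p) = 0 := by
          have := ih k hlt (mem_range.mpr (hlt.trans hj'))
          exact (ZMod.intCast_zmod_eq_zero_iff_dvd _ _).mpr this
        rw [h0]; simp
      · rw [mul_right_comm, Polynomial.coeff_mul_X_pow', if_neg (by omega)]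
end
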